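/- arXiv:1510.03403 — 4 statements merged into one kernel-verified Lean document; each statement's English description precedes it below -/
import Mathlib

section
/- Let C be a triangulated category with a bounded weight structure w, and let D be a full triangulated subcategory of C such that every object of D admits a weight decomposition inside D (i.e., with both terms in D). Then D is generated, as a triangulated subcategory, by the class of its objects of weight exactly 0 (objects in both D ∩ C_{w≤0} and D ∩ C_{w≥0}). -/
open CategoryTheory CategoryTheory.Limits CategoryTheory.Pretriangulated

universe v u

variable (C : Type u) [Category.{v} C] [HasZeroObject C] [Preadditive C] [HasShift C ℤ]
  [∀ n : ℤ, (shiftFunctor C n).Additive] [Pretriangulated C]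

/-- A weight structure on a triangulated category `C` (homological convention):
classes `le = C_{w≤0}` and `ge = C_{w≥0}`.  Note that `X ∈ C_{w≤n}` is expressed as
`X⟦-n⟧ ∈ le` and `X ∈ C_{w≥n}` as `X⟦-n⟧ ∈ ge`. -/
structure WeightStructure where
  le : Set C
  ge : Set C
  le_retract : ∀ (X Y : C), X ∈ le → ∀ (i : Y ⟶ X) (p : X ⟶ Y), i ≫ p = 𝟙 Y → Y ∈ le
  ge_retract : ∀ (X Y : C), X ∈ ge → ∀ (i : Y ⟶ X) (p : X ⟶ Y), i ≫ p = 𝟙 Y → Y ∈ ge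
  le_shift : ∀ X : C, X ∈ le → X⟦(-1 : ℤ)⟧ ∈ le
  ge_shift : ∀ X : C, X ∈ ge → X⟦(1 : ℤ)⟧ ∈ ge
  orth : ∀ (X Y : C), X ∈ le → Y ∈ ge → ∀ f : X ⟶ Y⟦(1 : ℤ)⟧, f = 0
  wdecomp : ∀ M : C, ∃ (X Y : C) (f : X ⟶ M) (g : M ⟶ Y) (h : Y ⟶ X⟦(1 : ℤ)⟧),
    (Triangle.mk f g h ∈ distTriang C) ∧ X ∈ le ∧ Y⟦(-1 : ℤ)⟧ ∈ ge

variable {C}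

/-- `E` is an extension of `B` by `A`: there is a distinguished triangle `A ⟶ E ⟶ B ⟶ A[1]`. -/
def IsExt (A E B : C) : Prop :=
  ∃ (f : A ⟶ E) (g : E ⟶ B) (h : B ⟶ A⟦(1 : ℤ)⟧), Triangle.mk f g h ∈ distTriang C

variable (C) in
/-- Membership in the (strictly full) triangulated subcategory of `C` generated by a
class of objects `G`. -/
inductive gen (G : Set C) : C → Prop
  | of (X : C) (hX : X ∈ G) : gen G X
  | zero (X : C) (hX : IsZero X) : gen G X
  | shift (X : C) (n : ℤ) (hX : gen G X) : gen G (X⟦n⟧)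
  | iso (X Y : C) (e : X ≅ Y) (hX : gen G X) : gen G Y
  | ext (A E B : C) (f : A ⟶ E) (g : E ⟶ B) (h : B ⟶ A⟦(1 : ℤ)⟧)
      (hT : Triangle.mk f g h ∈ distTriang C) (hA : gen G A) (hB : gen G B) : gen G E

namespace WeightStructure

lemma le_of_iso (w : WeightStructure C) {X Y : C} (e : X ≅ Y) (hX : X ∈ w.le) : Y ∈ w.le :=
  w.le_retract X Y hX e.inv e.hom e.inv_hom_id

lemma ge_of_iso (w : WeightStructure C) {X Y : C} (e : X ≅ Y) (hX : X ∈ w.ge) : Y ∈ w.ge :=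
  w.ge_retract X Y hX e.inv e.hom e.inv_hom_id

/-- `X⟦a⟧⟦b⟧ ≅ X⟦c⟧` when `a + b = c`. -/
noncomputable def shiftShift (X : C) (a b c : ℤ) (h : a + b = c) : X⟦a⟧⟦b⟧ ≅ X⟦c⟧ :=
  ((shiftFunctorAdd' C a b c h).app X).symm

/-- `X⟦-1⟧⟦1⟧ ≅ X`. -/
noncomputable def shiftNegOne (X : C) : (X⟦(-1 : ℤ)⟧)⟦(1 : ℤ)⟧ ≅ X :=
  shiftShift X (-1) 1 0 (by ring) ≪≫ (shiftFunctorZero C ℤ).app X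

lemma le_shift_nat (w : WeightStructure C) (X : C) (hX : X ∈ w.le) (n : ℕ) :
    X⟦-(n : ℤ)⟧ ∈ w.le := by
  induction n with
  | zero =>
    exact w.le_of_iso ((shiftFunctorZero' C (-((0 : ℕ) : ℤ)) (by norm_num)).symm.app X) hX
  | succ k ih =>
    exact w.le_of_iso (shiftShift X (-(k : ℤ)) (-1) (-((k + 1 : ℕ) : ℤ)) (by push_cast; ring))
      (w.le_shift _ ih)

lemma hom_zero_of_le_of_ge_one (w : WeightStructure C) {X Y : C}
    (hX : X ∈ w.le) (hY : Y⟦(-1 : ℤ)⟧ ∈ w.ge) (f : X ⟶ Y) : f = 0 := by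
  have h0 : f ≫ (shiftNegOne Y).inv = 0 := w.orth X (Y⟦(-1 : ℤ)⟧) hX hY _
  calc f = (f ≫ (shiftNegOne Y).inv) ≫ (shiftNegOne Y).hom := by simp
  _ = 0 := by rw [h0, Limits.zero_comp]

lemma hom_zero_of_le_neg_one_of_ge (w : WeightStructure C) {X Y : C}
    (hX : X ∈ w.le) (hY : Y ∈ w.ge) (f : X⟦(-1 : ℤ)⟧ ⟶ Y) : f = 0 := by
  apply (shiftFunctor C (1 : ℤ)).map_injective
  have h0 : (shiftNegOne X).inv ≫ (shiftFunctor C (1 : ℤ)).map f = 0 :=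
    w.orth X Y hX hY _
  calc (shiftFunctor C (1 : ℤ)).map f
      = (shiftNegOne X).hom ≫ ((shiftNegOne X).inv ≫ (shiftFunctor C (1 : ℤ)).map f) := by simp
  _ = 0 := by rw [h0, Limits.comp_zero]
  _ = (shiftFunctor C (1 : ℤ)).map 0 := by rw [Functor.map_zero]

/-- Transport a distinguished triangle along an isomorphism of the middle object. -/
lemma dist_of_iso₂ {X M M' Y : C} (f : X ⟶ M) (g : M ⟶ Y) (h : Y ⟶ X⟦(1 : ℤ)⟧)
    (hT : Triangle.mk f g h ∈ distTriang C) (e : M ≅ M') :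
    Triangle.mk (f ≫ e.hom) (e.inv ≫ g) h ∈ distTriang C :=
  isomorphic_distinguished _ hT _
    (Triangle.isoMk _ _ (Iso.refl _) e.symm (Iso.refl _)
      (by show (f ≫ e.hom) ≫ e.inv = 𝟙 X ≫ f; simp)
      (by exact Category.comp_id _)
      (by show h ≫ (shiftFunctor C (1 : ℤ)).map (𝟙 X) = 𝟙 Y ≫ h; simp))

/-- `w.le` is closed under extensions. -/
lemma le_ext (w : WeightStructure C) (T : Triangle C) (hT : T ∈ distTriang C)
    (h₁ : T.obj₁ ∈ w.le) (h₃ : T.obj₃ ∈ w.le) : T.obj₂ ∈ w.le := by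
  obtain ⟨X, Y, p, q, r, hT', hX, hY⟩ := w.wdecomp T.obj₂
  have hq : q = 0 := by
    have h1 : T.mor₁ ≫ q = 0 := w.hom_zero_of_le_of_ge_one h₁ hY _
    obtain ⟨φ, hφ⟩ := Triangle.yoneda_exact₂ T hT q h1
    rw [hφ, w.hom_zero_of_le_of_ge_one h₃ hY φ, Limits.comp_zero]
  obtain ⟨s, hs⟩ := Triangle.coyoneda_exact₂ _ hT' (𝟙 T.obj₂)
    (by rw [show (Triangle.mk p q r).mor₂ = q from rfl, hq]; exact Limits.comp_zero)
  exact w.le_retract X T.obj₂ hX s p hs.symm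

/-- `w.ge` is closed under extensions. -/
lemma ge_ext (w : WeightStructure C) (T : Triangle C) (hT : T ∈ distTriang C)
    (h₁ : T.obj₁ ∈ w.ge) (h₃ : T.obj₃ ∈ w.ge) : T.obj₂ ∈ w.ge := by
  obtain ⟨X, Y, p, q, r, hT', hX, hY⟩ := w.wdecomp (T.obj₂⟦(1 : ℤ)⟧)
  -- shift the weight decomposition triangle by `-1`
  have hTs : (Triangle.shiftFunctor C (-1)).obj (Triangle.mk p q r) ∈ distTriang C :=
    Triangle.shift_distinguished _ hT' (-1)
  set T₂ : Triangle C := (Triangle.shiftFunctor C (-1)).obj (Triangle.mk p q r) with hT₂def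
  let e : (T.obj₂⟦(1 : ℤ)⟧)⟦(-1 : ℤ)⟧ ≅ T.obj₂ :=
    shiftShift T.obj₂ 1 (-1) 0 (by ring) ≪≫ (shiftFunctorZero C ℤ).app T.obj₂
  have hTs' : Triangle.mk (T₂.mor₁ ≫ e.hom) (e.inv ≫ T₂.mor₂) T₂.mor₃ ∈ distTriang C :=
    dist_of_iso₂ T₂.mor₁ T₂.mor₂ T₂.mor₃ hTs e
  have ha : T₂.mor₁ ≫ e.hom = 0 := by
    have h1 : (T₂.mor₁ ≫ e.hom) ≫ T.mor₂ = 0 :=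
      w.hom_zero_of_le_neg_one_of_ge hX h₃ _
    obtain ⟨v, hv⟩ := Triangle.coyoneda_exact₂ T hT (T₂.mor₁ ≫ e.hom) h1
    rw [hv, w.hom_zero_of_le_neg_one_of_ge hX h₁ v]; exact Limits.zero_comp
  obtain ⟨s, hs⟩ := Triangle.yoneda_exact₂ _ hTs' (𝟙 T.obj₂)
    (by rw [show (Triangle.mk (T₂.mor₁ ≫ e.hom) (e.inv ≫ T₂.mor₂) T₂.mor₃).mor₁
        = T₂.mor₁ ≫ e.hom from rfl, ha]; exact Limits.zero_comp)
  exact w.ge_retract (Y⟦(-1 : ℤ)⟧) T.obj₂ hY (e.inv ≫ T₂.mor₂) s hs.symm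

end WeightStructure

/-- if `w` is bounded and every object of a (strictly full) triangulated
subcategory `D` admits a weight decomposition inside `D`, then `D` is generated by its
objects of weight exactly `0`. -/
theorem subcategory_with_weight_decompositions_generated_by_heart
    (w : WeightStructure C)
    (hbounded : ∀ X : C, ∃ i j : ℤ, X⟦-i⟧ ∈ w.ge ∧ X⟦-j⟧ ∈ w.le)
    (D : Set C)
    (hD0 : ∀ Z : C, IsZero Z → Z ∈ D)
    (hDshift : ∀ X ∈ D, ∀ n : ℤ, X⟦n⟧ ∈ D)
    (hDiso : ∀ X Y : C, (X ≅ Y) → X ∈ D → Y ∈ D)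
    (hDext : ∀ (A E B : C) (f : A ⟶ E) (g : E ⟶ B) (h : B ⟶ A⟦(1 : ℤ)⟧),
      (Triangle.mk f g h ∈ distTriang C) → A ∈ D → B ∈ D → E ∈ D)
    (hDwd : ∀ X ∈ D, ∃ (X₁ X₂ : C) (f : X₁ ⟶ X) (g : X ⟶ X₂) (h : X₂ ⟶ X₁⟦(1 : ℤ)⟧),
      (Triangle.mk f g h ∈ distTriang C) ∧ X₁ ∈ D ∧ X₂ ∈ D ∧
        X₁ ∈ w.le ∧ X₂⟦(-1 : ℤ)⟧ ∈ w.ge) :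
    ∀ X ∈ D, gen C {Y | Y ∈ D ∧ Y ∈ w.le ∧ Y ∈ w.ge} X := by
  set G : Set C := {Y | Y ∈ D ∧ Y ∈ w.le ∧ Y ∈ w.ge} with hG
  have key : ∀ (k : ℕ) (M : C), M ∈ D → M ∈ w.ge → M⟦-(k : ℤ)⟧ ∈ w.le → gen C G M := by
    intro k
    induction k with
    | zero =>
      intro M hMD hMge hMle
      have hMle' : M ∈ w.le :=
        w.le_of_iso ((shiftFunctorZero' C (-((0 : ℕ) : ℤ)) (by norm_num)).app M) hMle
      exact gen.of M ⟨hMD, hMle', hMge⟩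
    | succ k ih =>
      intro M hMD hMge hMle
      obtain ⟨X₁, X₂, f, g, h, hT, hX₁D, hX₂D, hX₁le, hX₂ge⟩ := hDwd M hMD
      -- X₁ is in the heart
      have hX₁ge : X₁ ∈ w.ge := by
        refine w.ge_ext _ (inv_rot_of_distTriang _ hT) ?_ ?_
        · exact w.ge_of_iso (Iso.refl _) hX₂ge
        · exact hMge
      have genX₁ : gen C G X₁ := gen.of X₁ ⟨hX₁D, hX₁le, hX₁ge⟩
      -- weight bound for X₂
      set n : ℤ := -((k + 1 : ℕ) : ℤ) with hn
      have hTs : (Triangle.shiftFunctor C n).obj (Triangle.mk f g h).rotate ∈ distTriang C :=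
        Triangle.shift_distinguished _ (rot_of_distTriang _ hT) n
      have hX₂le : X₂⟦n⟧ ∈ w.le := by
        refine w.le_ext _ hTs ?_ ?_
        · exact hMle
        · exact w.le_of_iso ((shiftFunctorAdd' C 1 n (-(k : ℤ)) (by push_cast; omega)).app X₁)
            (w.le_shift_nat X₁ hX₁le k)
      -- apply induction hypothesis to X₂⟦-1⟧
      have hM'le : (X₂⟦(-1 : ℤ)⟧)⟦-(k : ℤ)⟧ ∈ w.le :=
        w.le_of_iso ((shiftFunctorAdd' C (-1) (-(k : ℤ)) n (by push_cast; omega)).app X₂) hX₂le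
      have genM' : gen C G (X₂⟦(-1 : ℤ)⟧) := ih _ (hDshift X₂ hX₂D (-1)) hX₂ge hM'le
      have genX₂ : gen C G X₂ :=
        gen.iso _ _ (WeightStructure.shiftNegOne X₂) (gen.shift _ 1 genM')
      exact gen.ext X₁ M X₂ f g h hT genX₁ genX₂
  intro X hX
  obtain ⟨i, j, hge, hle⟩ := hbounded X
  set m : ℤ := max j i with hm
  have hdj : (((m - j).toNat : ℤ)) = m - j := Int.toNat_of_nonneg (by omega)
  have hlem : X⟦-m⟧ ∈ w.le :=
    w.le_of_iso
      (((shiftFunctorAdd' C (-j) (-(((m - j).toNat : ℕ) : ℤ)) (-m) (by rw [hdj]; ring)).app X).symm)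
      (w.le_shift_nat _ hle (m - j).toNat)
  set k : ℕ := (m - i).toNat with hk
  have hki : ((k : ℕ) : ℤ) = m - i := Int.toNat_of_nonneg (by omega)
  have hMle : (X⟦-i⟧)⟦-(k : ℤ)⟧ ∈ w.le :=
    w.le_of_iso ((shiftFunctorAdd' C (-i) (-(k : ℤ)) (-m) (by rw [hki]; ring)).app X) hlem
  have genM : gen C G (X⟦-i⟧) := key k (X⟦-i⟧) (hDshift X hX (-i)) hge hMle
  have e : (X⟦-i⟧)⟦i⟧ ≅ X :=
    WeightStructure.shiftShift X (-i) i 0 (by ring) ≪≫ (shiftFunctorZero C ℤ).app X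
  exact gen.iso _ _ e (gen.shift _ i genM)
end

section
/- Let C be a triangulated category with a weight structure w, and let X be an object such that L(X) ∈ (C/D)_{w≥0} for a weight-exact localization L: C → C/D by a triangulated subcategory D on which w restricts. Then the following are equivalent: (a) there exists a distinguished triangle T → X → X₀ → T[1] with L(T) = 0 and X₀ ∈ C_{w≥0}; (b) there exists a distinguished triangle T' → X → X₀' → T'[1] with T' ∈ Obj(D) ∩ C_{w≤0} and X₀' ∈ C_{w≥0}. -/
open CategoryTheory CategoryTheory.Limits CategoryTheory.Pretriangulated

universe v u

variable (C : Type u) [Category.{v} C] [HasZeroObject C] [Preadditive C] [HasShift C ℤ]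
  [∀ n : ℤ, (shiftFunctor C n).Additive] [Pretriangulated C]

variable {C}

/-- `ge` is closed under isomorphisms. -/
lemma WeightStructure.ge_of_iso_s10 (w : WeightStructure C) {A B : C} (e : A ≅ B)
    (hA : A ∈ w.ge) : B ∈ w.ge :=
  w.ge_retract A B hA e.inv e.hom (by simp)

/-- If `A⟦-1⟧ ∈ ge` then `A ∈ ge`. -/
lemma WeightStructure.ge_of_shift_neg_one (w : WeightStructure C) {A : C}
    (hA : A⟦(-1 : ℤ)⟧ ∈ w.ge) : A ∈ w.ge :=
  w.ge_of_iso_s10 ((shiftFunctorCompIsoId C (-1 : ℤ) (1 : ℤ) (by ring)).app A)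
    (w.ge_shift _ hA)

/-- Hom-vanishing criterion for membership in `ge`. -/
lemma WeightStructure.ge_char (w : WeightStructure C) (M : C)
    (hM : ∀ a ∈ w.le, ∀ f : a ⟶ M⟦(1 : ℤ)⟧, f = 0) : M ∈ w.ge := by
  obtain ⟨A, B, i, p, δ, hTri, hA, hB⟩ := w.wdecomp (M⟦(1 : ℤ)⟧)
  have hi : i = 0 := hM A hA i
  obtain ⟨r, hr⟩ : ∃ r : B ⟶ M⟦(1 : ℤ)⟧, 𝟙 _ = p ≫ r := Triangle.yoneda_exact₂ _ hTri (𝟙 (M⟦(1 : ℤ)⟧)) (by simp [hi]; exact zero_comp)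
  have h1 : M⟦(1 : ℤ)⟧⟦(-1 : ℤ)⟧ ∈ w.ge := by
    refine w.ge_retract (B⟦(-1 : ℤ)⟧) _ hB (p⟦(-1 : ℤ)⟧') (r⟦(-1 : ℤ)⟧') ?_
    rw [← Functor.map_comp, ← hr]
    simp
  exact w.ge_of_iso_s10 ((shiftFunctorCompIsoId C (1 : ℤ) (-1 : ℤ) (by ring)).app M) h1

/-- for a weight-exact localization `L : C ⥤ C'` by a triangulated
subcategory `D` on which `w` restricts, and `X` with `L(X)` of non-negative weights,
the two forms of the strong left weight lifting property are equivalent. -/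
theorem weight_lifting_triangle_forms_equiv
    {C' : Type*} [Category C'] [HasZeroObject C'] [Preadditive C'] [HasShift C' ℤ]
    [∀ n : ℤ, (shiftFunctor C' n).Additive] [Pretriangulated C']
    (w : WeightStructure C) (w' : WeightStructure C')
    (L : C ⥤ C') [L.CommShift ℤ] [L.IsTriangulated]
    (hle : ∀ X ∈ w.le, L.obj X ∈ w'.le) (hge : ∀ X ∈ w.ge, L.obj X ∈ w'.ge)
    (D : Set C)
    (hDshift : ∀ X ∈ D, ∀ n : ℤ, X⟦n⟧ ∈ D)
    (hDext : ∀ (A E B : C) (f : A ⟶ E) (g : E ⟶ B) (h : B ⟶ A⟦(1 : ℤ)⟧),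
      (Triangle.mk f g h ∈ distTriang C) → A ∈ D → B ∈ D → E ∈ D)
    (hDwd : ∀ X ∈ D, ∃ (X₁ X₂ : C) (f : X₁ ⟶ X) (g : X ⟶ X₂) (h : X₂ ⟶ X₁⟦(1 : ℤ)⟧),
      (Triangle.mk f g h ∈ distTriang C) ∧ X₁ ∈ D ∧ X₂ ∈ D ∧
        X₁ ∈ w.le ∧ X₂⟦(-1 : ℤ)⟧ ∈ w.ge)
    (hker : ∀ T : C, IsZero (L.obj T) ↔ T ∈ D)
    (X : C) (hX : L.obj X ∈ w'.ge) :
    (∃ (T X₀ : C) (f : T ⟶ X) (g : X ⟶ X₀) (h : X₀ ⟶ T⟦(1 : ℤ)⟧),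
      (Triangle.mk f g h ∈ distTriang C) ∧ IsZero (L.obj T) ∧ X₀ ∈ w.ge) ↔
    (∃ (T' X₀' : C) (f : T' ⟶ X) (g : X ⟶ X₀') (h : X₀' ⟶ T'⟦(1 : ℤ)⟧),
      (Triangle.mk f g h ∈ distTriang C) ∧ T' ∈ D ∧ T' ∈ w.le ∧ X₀' ∈ w.ge) := by
  constructor
  · rintro ⟨T, X₀, f, g, h, hT, hLT, hX₀⟩
    obtain ⟨T₁, T₂, u, v, wm, hTD, hT₁D, hT₂D, hT₁le, hT₂ge'⟩ := hDwd T ((hker T).mp hLT)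
    have hT₂ge : T₂ ∈ w.ge := w.ge_of_shift_neg_one hT₂ge'
    obtain ⟨Y, g', h', hTA⟩ := distinguished_cocone_triangle (u ≫ f)
    obtain ⟨s, hs₁, hs₂⟩ : ∃ s : Y ⟶ X₀, g' ≫ s = 𝟙 X ≫ g ∧ h' ≫ u⟦(1 : ℤ)⟧' = s ≫ h :=
      complete_distinguished_triangle_morphism
      (Triangle.mk (u ≫ f) g' h') (Triangle.mk f g h) hTA hT u (𝟙 X) (by simp; exact Category.comp_id _)
    refine ⟨T₁, Y, u ≫ f, g', h', hTA, hT₁D, hT₁le, ?_⟩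
    refine w.ge_char Y ?_
    intro a ha φ
    -- Step A: φ ≫ h'⟦1⟧ = 0
    have hstepA : φ ≫ h'⟦(1 : ℤ)⟧' = 0 := by
      have e1 : (φ ≫ h'⟦(1 : ℤ)⟧') ≫
          ((Triangle.mk u v wm).rotate.rotate.rotate.mor₁)⟦(1 : ℤ)⟧' = 0 := by
        change (φ ≫ h'⟦(1 : ℤ)⟧') ≫ (-u⟦(1 : ℤ)⟧')⟦(1 : ℤ)⟧' = 0
        rw [Functor.map_neg, Preadditive.comp_neg, neg_eq_zero, Category.assoc,
          ← Functor.map_comp, hs₂, Functor.map_comp, ← Category.assoc,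
          w.orth a X₀ ha hX₀ (φ ≫ s⟦(1 : ℤ)⟧'), zero_comp]
      obtain ⟨β, hβ⟩ : ∃ β : a ⟶ T₂⟦(1 : ℤ)⟧, φ ≫ h'⟦(1 : ℤ)⟧' = β ≫ (-wm⟦(1 : ℤ)⟧') :=
        Triangle.coyoneda_exact₁ _
        (rot_of_distTriang _ (rot_of_distTriang _ (rot_of_distTriang _ hTD)))
        (φ ≫ h'⟦(1 : ℤ)⟧') e1
      rw [hβ, w.orth a T₂ ha hT₂ge β, zero_comp]
    -- Step B: φ factors through X⟦1⟧
    obtain ⟨ψ, hψ⟩ : ∃ ψ : a ⟶ X⟦(1 : ℤ)⟧, φ = ψ ≫ (-g'⟦(1 : ℤ)⟧') := Triangle.coyoneda_exact₁ _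
      (rot_of_distTriang _ (rot_of_distTriang _ hTA)) φ (by exact hstepA)
    -- Step C: ψ factors through T⟦1⟧
    have hψg : ψ ≫ g⟦(1 : ℤ)⟧' = 0 := w.orth a X₀ ha hX₀ _
    obtain ⟨χ, hχ⟩ : ∃ χ : a ⟶ T⟦(1 : ℤ)⟧, ψ = χ ≫ (-f⟦(1 : ℤ)⟧') := Triangle.coyoneda_exact₁ _ (rot_of_distTriang _ hT) ψ
      (by exact hψg)
    -- Step D: χ factors through T₁⟦1⟧
    have hχv : χ ≫ v⟦(1 : ℤ)⟧' = 0 := w.orth a T₂ ha hT₂ge _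
    obtain ⟨ξ, hξ⟩ : ∃ ξ : a ⟶ T₁⟦(1 : ℤ)⟧, χ = ξ ≫ (-u⟦(1 : ℤ)⟧') := Triangle.coyoneda_exact₁ _ (rot_of_distTriang _ hTD) χ
      (by exact hχv)
    have hz : (u ≫ f) ≫ g' = 0 := comp_distTriang_mor_zero₁₂ _ hTA
    have hz' : u ≫ f ≫ g' = 0 := by rw [← Category.assoc, hz]
    rw [hψ, hχ, hξ]
    simp only [Preadditive.neg_comp, Preadditive.comp_neg, neg_neg, Category.assoc,
      ← Functor.map_comp, hz', Functor.map_zero, comp_zero, neg_zero]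
  · rintro ⟨T', X₀', f, g, h, hTri, hT'D, _, hge'⟩
    exact ⟨T', X₀', f, g, h, hTri, (hker T').mpr hT'D, hge'⟩
end

section
/- Let C be a triangulated category with a weight structure w that is bounded below (every object lies in C_{w≥i} for some i). Then C_{w≤0} equals the extension-closure of ∪_{i≤0} C_{w=i}, i.e., the smallest class containing 0 and all objects of weight exactly i for i ≤ 0 and closed under extensions. -/
open CategoryTheory CategoryTheory.Limits CategoryTheory.Pretriangulated

universe v u

variable (C : Type u) [Category.{v} C] [HasZeroObject C] [Preadditive C] [HasShift C ℤ]
  [∀ n : ℤ, (shiftFunctor C n).Additive] [Pretriangulated C]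

variable {C}

variable (C) in
/-- The extension-closure of a class `B` of objects: the smallest class containing `B`
and the zero objects and closed under extensions. -/
inductive extClosure (B : Set C) : C → Prop
  | of (X : C) (hX : X ∈ B) : extClosure B X
  | zero (X : C) (hX : IsZero X) : extClosure B X
  | ext (A E X : C) (f : A ⟶ E) (g : E ⟶ X) (h : X ⟶ A⟦(1 : ℤ)⟧)
      (hT : Triangle.mk f g h ∈ distTriang C)
      (hA : extClosure B A) (hX : extClosure B X) : extClosure B E


section Aux

variable (w : WeightStructure C)

lemma le_iso {X Y : C} (e : X ≅ Y) (hX : X ∈ w.le) : Y ∈ w.le :=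
  w.le_retract X Y hX e.inv e.hom (by simp)

lemma ge_iso {X Y : C} (e : X ≅ Y) (hX : X ∈ w.ge) : Y ∈ w.ge :=
  w.ge_retract X Y hX e.inv e.hom (by simp)

lemma le_shift_neg_nat {X : C} (hX : X ∈ w.le) : ∀ n : ℕ, X⟦-(n : ℤ)⟧ ∈ w.le := by
  intro n
  induction n with
  | zero =>
      simp only [Nat.cast_zero, neg_zero]
      exact le_iso w ((shiftFunctorZero C ℤ).app X).symm hX
  | succ n ih =>
      refine le_iso w ?_ (w.le_shift _ ih)
      exact ((shiftFunctorAdd' C (-(n : ℤ)) (-1) (-((n + 1 : ℕ) : ℤ))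
        (by push_cast; ring)).app X).symm

lemma ge_shift_nat {X : C} (hX : X ∈ w.ge) : ∀ n : ℕ, X⟦(n : ℤ)⟧ ∈ w.ge := by
  intro n
  induction n with
  | zero =>
      simp only [Nat.cast_zero]
      exact ge_iso w ((shiftFunctorZero C ℤ).app X).symm hX
  | succ n ih =>
      refine ge_iso w ?_ (w.ge_shift _ ih)
      exact ((shiftFunctorAdd' C ((n : ℤ)) 1 (((n + 1 : ℕ) : ℤ))
        (by push_cast; ring)).app X).symm

lemma le_shift_nonpos {X : C} (hX : X ∈ w.le) {i : ℤ} (hi : i ≤ 0) : X⟦i⟧ ∈ w.le := by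
  obtain ⟨n, rfl⟩ := Int.exists_eq_neg_ofNat hi
  exact le_shift_neg_nat w hX n

lemma zero_hom₁ {X Y : C} (hX : X ∈ w.le) (hY : Y⟦(-1 : ℤ)⟧ ∈ w.ge) (f : X ⟶ Y) : f = 0 := by
  have e : Y⟦(-1 : ℤ)⟧⟦(1 : ℤ)⟧ ≅ Y := (shiftFunctorCompIsoId C (-1) 1 (by ring)).app Y
  have h0 := w.orth X (Y⟦(-1 : ℤ)⟧) hX hY (f ≫ e.inv)
  calc f = (f ≫ e.inv) ≫ e.hom := by simp
  _ = 0 := by rw [h0, zero_comp]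

lemma zero_hom₂ {A W : C} (hA : A⟦(1 : ℤ)⟧ ∈ w.le) (hW : W ∈ w.ge) (u : A ⟶ W) : u = 0 := by
  have h0 : (shiftFunctor C (1 : ℤ)).map u = 0 := w.orth _ _ hA hW _
  exact (shiftFunctor C (1 : ℤ)).map_injective (by rw [h0, Functor.map_zero])

lemma le_ext (T : Triangle C) (hT : T ∈ distTriang C)
    (h₁ : T.obj₁ ∈ w.le) (h₃ : T.obj₃ ∈ w.le) : T.obj₂ ∈ w.le := by
  obtain ⟨X, Y, f', g', h', hT', hX, hY⟩ := w.wdecomp T.obj₂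
  have hg' : g' = 0 := by
    obtain ⟨v, hv⟩ := Triangle.yoneda_exact₂ _ hT g' (zero_hom₁ w h₁ hY (T.mor₁ ≫ g'))
    rw [hv, zero_hom₁ w h₃ hY v, comp_zero]
  obtain ⟨s, hs⟩ := Triangle.coyoneda_exact₂ _ hT' (𝟙 T.obj₂)
    (by show 𝟙 T.obj₂ ≫ g' = 0; rw [hg', comp_zero])
  exact w.le_retract X T.obj₂ hX s f' hs.symm

lemma shift_tri {A E B : C} {f : A ⟶ E} {g : E ⟶ B} {h : B ⟶ A⟦(1 : ℤ)⟧}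
    (hT : Triangle.mk f g h ∈ distTriang C) (n : ℤ) :
    ∃ (f' : A⟦n⟧ ⟶ E⟦n⟧) (g' : E⟦n⟧ ⟶ B⟦n⟧) (h' : B⟦n⟧ ⟶ A⟦n⟧⟦(1 : ℤ)⟧),
      Triangle.mk f' g' h' ∈ distTriang C := by
  have := Triangle.shift_distinguished (Triangle.mk f g h) hT n
  rw [Triangle.shiftFunctor_eq] at this
  exact ⟨_, _, _, this⟩

lemma ge_ext (T : Triangle C) (hT : T ∈ distTriang C)
    (h₁ : T.obj₁ ∈ w.ge) (h₃ : T.obj₃ ∈ w.ge) : T.obj₂ ∈ w.ge := by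
  obtain ⟨X₁, Y₁, a, b, c, hT₁, hX₁, hY₁⟩ := w.wdecomp (T.obj₂⟦(1 : ℤ)⟧)
  obtain ⟨a', b', c', hT₂⟩ := shift_tri hT₁ (-1)
  have e : T.obj₂⟦(1 : ℤ)⟧⟦(-1 : ℤ)⟧ ≅ T.obj₂ :=
    (shiftFunctorCompIsoId C 1 (-1) (by ring)).app T.obj₂
  have hX₁' : X₁⟦(-1 : ℤ)⟧⟦(1 : ℤ)⟧ ∈ w.le :=
    le_iso w ((shiftFunctorCompIsoId C (-1) 1 (by ring)).app X₁).symm hX₁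
  have key : ∀ u : X₁⟦(-1 : ℤ)⟧ ⟶ T.obj₂, u = 0 := by
    intro u
    obtain ⟨v, hv⟩ := Triangle.coyoneda_exact₂ _ hT u (zero_hom₂ w hX₁' h₃ (u ≫ T.mor₂))
    rw [hv, zero_hom₂ w hX₁' h₁ v, zero_comp]
  have ha' : a' = 0 := by
    have h0 : a' ≫ e.hom = 0 := key _
    calc a' = (a' ≫ e.hom) ≫ e.inv := by simp
    _ = 0 := by rw [h0, zero_comp]
  obtain ⟨r, hr⟩ := Triangle.yoneda_exact₂ _ hT₂ (𝟙 (T.obj₂⟦(1 : ℤ)⟧⟦(-1 : ℤ)⟧))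
    (by show a' ≫ 𝟙 _ = 0; rw [ha', zero_comp])
  have hmem : T.obj₂⟦(1 : ℤ)⟧⟦(-1 : ℤ)⟧ ∈ w.ge :=
    w.ge_retract _ _ hY₁ b' r hr.symm
  exact ge_iso w e hmem

open ZeroObject in
lemma extClosure_iso {B : Set C} {X Y : C} (e : X ≅ Y) (hX : extClosure C B X) :
    extClosure C B Y := by
  refine extClosure.ext X Y (0 : C) e.hom 0 0 ?_ hX (extClosure.zero _ (isZero_zero C))
  refine isomorphic_distinguished _ (contractible_distinguished X) _ ?_
  exact Triangle.isoMk _ _ (Iso.refl X) e.symm (Iso.refl _) (by exact e.hom_inv_id.trans (Category.comp_id _).symm) (by exact (Category.comp_id _).trans (comp_zero).symm) (by exact zero_comp.trans (comp_zero).symm)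

lemma main_ind :
    ∀ (n : ℕ) (X : C), X ∈ w.le → X⟦(n : ℤ)⟧ ∈ w.ge →
      extClosure C {Y | ∃ i : ℤ, i ≤ 0 ∧ Y⟦-i⟧ ∈ w.le ∧ Y⟦-i⟧ ∈ w.ge} X := by
  intro n
  induction n with
  | zero =>
      intro X hX hXg
      simp only [Nat.cast_zero] at hXg
      refine extClosure.of X ⟨0, le_refl 0, ?_, ?_⟩
      · rw [neg_zero]
        exact le_iso w ((shiftFunctorZero C ℤ).app X).symm hX
      · rw [neg_zero]
        exact hXg
  | succ n ih =>
      intro X hX hXg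
      set m : ℤ := (n : ℤ) + 1 with hm
      have hXm : X⟦m⟧ ∈ w.ge := by
        have : ((n + 1 : ℕ) : ℤ) = m := by push_cast; ring
        rwa [this] at hXg
      obtain ⟨X₀, Y₀, a, b, c, hT₀, hX₀, hY₀⟩ := w.wdecomp (X⟦m⟧)
      obtain ⟨a', b', c', hT₁⟩ := shift_tri hT₀ (-m)
      have eX : X⟦m⟧⟦-m⟧ ≅ X := (shiftFunctorCompIsoId C m (-m) (by ring)).app X
      have iA : X₀⟦-m⟧⟦m⟧ ≅ X₀ := (shiftFunctorCompIsoId C (-m) m (by ring)).app X₀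
      -- X₀ ∈ ge via the inv-rotated triangle
      have hX₀ge : X₀ ∈ w.ge := by
        refine ge_ext w (Triangle.mk a b c).invRotate
          (inv_rot_of_distTriang _ hT₀) ?_ ?_
        · exact hY₀
        · exact hXm
      -- B := Y₀⟦-m⟧ is in le
      have hA1le : X₀⟦-m⟧⟦(1 : ℤ)⟧ ∈ w.le := by
        refine le_iso w ((shiftFunctorAdd' C (-m) 1 (-(n : ℤ)) (by push_cast; ring)).app X₀) ?_
        exact le_shift_neg_nat w hX₀ n
      have hBle : Y₀⟦-m⟧ ∈ w.le := by
        refine le_ext w (Triangle.mk a' b' c').rotate (rot_of_distTriang _ hT₁) ?_ ?_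
        · exact le_iso w eX.symm hX
        · exact hA1le
      have hBge : Y₀⟦-m⟧⟦(n : ℤ)⟧ ∈ w.ge :=
        ge_iso w ((shiftFunctorAdd' C (-m) (n : ℤ) (-1) (by push_cast; ring)).app Y₀) hY₀
      have hBcl := ih _ hBle hBge
      have hAcl : extClosure C {Y | ∃ i : ℤ, i ≤ 0 ∧ Y⟦-i⟧ ∈ w.le ∧ Y⟦-i⟧ ∈ w.ge} (X₀⟦-m⟧) := by
        refine extClosure.of _ ⟨-m, by omega, ?_, ?_⟩
        · rw [neg_neg]; exact le_iso w iA.symm hX₀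
        · rw [neg_neg]; exact ge_iso w iA.symm hX₀ge
      have hEcl := extClosure.ext _ _ _ a' b' c' hT₁ hAcl hBcl
      exact extClosure_iso eX hEcl

end Aux

/-- if `w` is bounded below then `C_{w≤0}` is the extension-closure of
`∪_{i≤0} C_{w=i}`. -/
theorem le_eq_extClosure_of_bounded_below (w : WeightStructure C)
    (hbdd : ∀ X : C, ∃ i : ℤ, X⟦-i⟧ ∈ w.ge) :
    w.le = {X | extClosure C {Y | ∃ i : ℤ, i ≤ 0 ∧ Y⟦-i⟧ ∈ w.le ∧ Y⟦-i⟧ ∈ w.ge} X} := by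
  ext X
  simp only [Set.mem_setOf_eq]
  constructor
  · intro hX
    obtain ⟨i, hi⟩ := hbdd X
    have hk : (((i.natAbs + i).toNat : ℤ)) = (i.natAbs : ℤ) + i := by omega
    have hge : X⟦(i.natAbs : ℤ)⟧ ∈ w.ge := by
      refine ge_iso w ((shiftFunctorAdd' C (-i) (((i.natAbs + i).toNat : ℤ))
        ((i.natAbs : ℤ)) (by omega)).app X).symm ?_
      exact ge_shift_nat w hi _
    exact main_ind w i.natAbs X hX hge
  · intro h
    induction h with
    | of Y hY =>
        obtain ⟨i, hi0, hil, _⟩ := hY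
        have h1 : Y⟦-i⟧⟦i⟧ ∈ w.le := le_shift_nonpos w hil hi0
        exact le_iso w ((shiftFunctorCompIsoId C (-i) i (by ring)).app Y) h1
    | zero X hX =>
        obtain ⟨X₀, Y₀, a, b, c, hT, hX₀, _⟩ := w.wdecomp X
        exact w.le_retract X₀ X hX₀ 0 0 (by rw [zero_comp]; exact (hX.eq_of_src _ _).symm)
    | ext A E X f g h hT hA hX ihA ihX =>
        exact le_ext w (Triangle.mk f g h) hT ihA ihX
end

section
/- Let C be a triangulated category and F: C → C an exact (triangulated) functor such that F is isomorphic to F∘[2] ⊕ id_C (i.e., there is a natural isomorphism F(X) ≅ F(X[2]) ⊕ X for all X, compatible with the triangulated structure). Then C is Karoubian (idempotent-complete): every idempotent endomorphism in C splits. -/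
open CategoryTheory CategoryTheory.Limits CategoryTheory.Pretriangulated

universe v u

namespace PeriodicFunctorAux

open CategoryTheory.Idempotents

noncomputable section

variable {C : Type u} [Category.{v} C] [Preadditive C]

@[simp]
theorem add_f {P Q : Karoubi C} (f g : P ⟶ Q) : (f + g).f = f.f + g.f := rfl

instance karoubiHasBinaryBiproducts [HasBinaryBiproducts C] :
    HasBinaryBiproducts (Karoubi C) where
  has_binary_biproduct P Q := hasBinaryBiproduct_of_total
    { pt := ⟨P.X ⊞ Q.X, biprod.map P.p Q.p, by ext <;> simp⟩
      fst := ⟨biprod.fst ≫ P.p, by simp⟩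
      snd := ⟨biprod.snd ≫ Q.p, by simp⟩
      inl := ⟨P.p ≫ biprod.inl, by simp⟩
      inr := ⟨Q.p ≫ biprod.inr, by simp⟩
      inl_fst := Karoubi.hom_ext _ _ (by simp)
      inl_snd := Karoubi.hom_ext _ _ (by simp)
      inr_fst := Karoubi.hom_ext _ _ (by simp)
      inr_snd := Karoubi.hom_ext _ _ (by simp) }
    (Karoubi.hom_ext _ _ (by simp [biprod.map_eq]))

/-- An additive functor preserves binary biproducts, explicit iso. -/
def addMapBiprod {D : Type*} {E : Type*} [Category D] [Category E] [Preadditive D]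
    [Preadditive E] [HasBinaryBiproducts D] [HasBinaryBiproducts E]
    (H : D ⥤ E) [H.Additive] (A B : D) : H.obj (A ⊞ B) ≅ H.obj A ⊞ H.obj B where
  hom := biprod.lift (H.map biprod.fst) (H.map biprod.snd)
  inv := biprod.desc (H.map biprod.inl) (H.map biprod.inr)
  hom_inv_id := by
    rw [biprod.lift_desc, ← H.map_comp, ← H.map_comp, ← H.map_add, biprod.total, H.map_id]
  inv_hom_id := by
    ext <;> simp [← H.map_comp]

/-- Transport of a Karoubi object along an isomorphism conjugating the idempotents. -/
def mkIso {W W' : C} (φ : W ≅ W') {q : W ⟶ W} {q' : W' ⟶ W'} (hq : q ≫ q = q)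
    (hq' : q' ≫ q' = q') (hconj : q ≫ φ.hom = φ.hom ≫ q') :
    (⟨W, q, hq⟩ : Karoubi C) ≅ ⟨W', q', hq'⟩ where
  hom := ⟨q ≫ φ.hom, by
    simp only [Category.assoc, ← hconj]
    simp only [reassoc_of% hq]⟩
  inv := ⟨φ.inv ≫ q, by
    have h2 : q' ≫ φ.inv = φ.inv ≫ q := by
      rw [← cancel_mono φ.hom]
      simp [hconj]
    simp only [Category.assoc]
    rw [reassoc_of% h2]
    simp [reassoc_of% hq, hq]⟩
  hom_inv_id := Karoubi.hom_ext _ _ (by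
    simp only [Karoubi.comp_f, Karoubi.id_f, Category.assoc, Iso.hom_inv_id_assoc]
    simp [reassoc_of% hq, hq])
  inv_hom_id := Karoubi.hom_ext _ _ (by
    simp only [Karoubi.comp_f, Karoubi.id_f, Category.assoc]
    simp only [reassoc_of% hq]
    rw [hconj, Iso.inv_hom_id_assoc])

variable [HasBinaryBiproducts C]

/-- Splitting of an object of `C` in `Karoubi C` along an idempotent. -/
def splitIso {W : C} (q : W ⟶ W) (hq : q ≫ q = q) :
    (toKaroubi C).obj W ≅
      (⟨W, q, hq⟩ : Karoubi C) ⊞ ⟨W, 𝟙 W - q, by simp [hq]⟩ where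
  hom := biprod.lift ⟨q, by simp [hq]⟩ ⟨𝟙 W - q, by simp [hq]⟩
  inv := biprod.desc ⟨q, by simp [hq]⟩ ⟨𝟙 W - q, by simp [hq]⟩
  hom_inv_id := by
    rw [biprod.lift_desc]
    exact Karoubi.hom_ext _ _ (by simp [hq])
  inv_hom_id := by
    apply biprod.hom_ext' <;> apply biprod.hom_ext <;>
      simp only [Category.assoc, Category.comp_id, Category.id_comp,
        biprod.inl_desc_assoc, biprod.inr_desc_assoc, biprod.lift_fst, biprod.lift_snd,
        biprod.inl_fst, biprod.inl_snd, biprod.inr_fst, biprod.inr_snd,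
        Karoubi.hom_eq_zero_iff, Karoubi.hom_ext_iff, Karoubi.comp_f, Karoubi.id_f] <;>
      simp [hq]

/-- A Karoubi object over a biproduct with a diagonal idempotent splits. -/
def biprodMkIso {A B : C} (α : A ⟶ A) (β : B ⟶ B) (hα : α ≫ α = α) (hβ : β ≫ β = β) :
    (⟨A ⊞ B, biprod.map α β, by ext <;> simp [hα, hβ]⟩ : Karoubi C) ≅
      (⟨A, α, hα⟩ : Karoubi C) ⊞ ⟨B, β, hβ⟩ where
  hom := biprod.lift ⟨biprod.fst ≫ α, by simp [hα]⟩ ⟨biprod.snd ≫ β, by simp [hβ]⟩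
  inv := biprod.desc ⟨α ≫ biprod.inl, by simp [reassoc_of% hα]⟩
    ⟨β ≫ biprod.inr, by simp [reassoc_of% hβ]⟩
  hom_inv_id := by
    rw [biprod.lift_desc]
    refine Karoubi.hom_ext _ _ ?_
    simp [biprod.map_eq, reassoc_of% hα, reassoc_of% hβ, hα, hβ]
  inv_hom_id := by
    apply biprod.hom_ext' <;> apply biprod.hom_ext <;>
      simp only [Category.assoc, Category.comp_id, Category.id_comp,
        biprod.inl_desc_assoc, biprod.inr_desc_assoc, biprod.lift_fst, biprod.lift_snd,
        biprod.inl_fst, biprod.inl_snd, biprod.inr_fst, biprod.inr_snd,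
        Karoubi.hom_eq_zero_iff, Karoubi.hom_ext_iff, Karoubi.comp_f, Karoubi.id_f] <;>
      simp [hα, hβ, reassoc_of% hα, reassoc_of% hβ]

/-- The extension of a functor to Karoubi envelopes. -/
def gfun (F : C ⥤ C) : Karoubi C ⥤ Karoubi C where
  obj P := ⟨F.obj P.X, F.map P.p, by rw [← F.map_comp, P.idem]⟩
  map {P Q} f := ⟨F.map f.f, by
    show F.map P.p ≫ F.map f.f ≫ F.map Q.p = F.map f.f
    rw [← F.map_comp, ← F.map_comp]; congr 1; simp⟩
  map_id P := rfl
  map_comp f g := Karoubi.hom_ext _ _ (by simp [Karoubi.comp_f])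

instance gfunAdditive (F : C ⥤ C) [F.Additive] : (gfun F).Additive where
  map_add := Karoubi.hom_ext _ _ (by simp [gfun]; rfl)

/-- middle four exchange for biproducts -/
def exch (w x y z : C) : (w ⊞ x) ⊞ (y ⊞ z) ≅ (w ⊞ y) ⊞ (x ⊞ z) where
  hom := biprod.lift (biprod.lift (biprod.fst ≫ biprod.fst) (biprod.snd ≫ biprod.fst))
    (biprod.lift (biprod.fst ≫ biprod.snd) (biprod.snd ≫ biprod.snd))
  inv := biprod.lift (biprod.lift (biprod.fst ≫ biprod.fst) (biprod.snd ≫ biprod.fst))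
    (biprod.lift (biprod.fst ≫ biprod.snd) (biprod.snd ≫ biprod.snd))
  hom_inv_id := by ext <;> simp
  inv_hom_id := by ext <;> simp

/-- The seven-leaf shuffle isomorphism we need. -/
def shuffle7 (a b c d e f g : C) :
    (a ⊞ b) ⊞ ((c ⊞ d) ⊞ ((e ⊞ f) ⊞ g)) ≅ f ⊞ ((g ⊞ d) ⊞ ((c ⊞ e) ⊞ (a ⊞ b))) :=
  (biprod.mapIso (Iso.refl _)
      ((biprod.mapIso (Iso.refl _)
          ((biprod.mapIso (biprod.braiding e f) (Iso.refl g)) ≪≫ biprod.associator f e g)) ≪≫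
        (biprod.braiding _ _ ≪≫ biprod.associator f (e ⊞ g) (c ⊞ d)))) ≪≫
    (biprod.braiding _ _ ≪≫ biprod.associator f ((e ⊞ g) ⊞ (c ⊞ d)) (a ⊞ b)) ≪≫
    biprod.mapIso (Iso.refl f)
      (biprod.mapIso
        ((exch e g c d) ≪≫ biprod.braiding _ _ ≪≫ biprod.mapIso (Iso.refl _) (biprod.braiding e c))
        (Iso.refl (a ⊞ b)) ≪≫ biprod.associator (g ⊞ d) (c ⊞ e) (a ⊞ b))

variable [HasZeroObject C] [HasShift C ℤ] [∀ n : ℤ, (shiftFunctor C n).Additive]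
  [Pretriangulated C]

/-- The cone of an idempotent `q` splits in the Karoubi envelope as
`(W, 1-q) ⊕ (W⟦1⟧, 1 - q⟦1⟧)`. -/
theorem coneIso {W K : C} (q : W ⟶ W) (hq : q ≫ q = q)
    (a : W ⟶ K) (δ : K ⟶ W⟦(1:ℤ)⟧) (hT : Triangle.mk q a δ ∈ distTriang C) :
    Nonempty ((toKaroubi C).obj K ≅
      (⟨W, 𝟙 W - q, by simp [hq]⟩ : Karoubi C) ⊞
        ⟨W⟦(1:ℤ)⟧, 𝟙 (W⟦(1:ℤ)⟧) - q⟦(1:ℤ)⟧', by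
          have h : q⟦(1:ℤ)⟧' ≫ q⟦(1:ℤ)⟧' = q⟦(1:ℤ)⟧' := by rw [← Functor.map_comp, hq]
          simp [h]⟩) := by
  have hq1 : q⟦(1:ℤ)⟧' ≫ q⟦(1:ℤ)⟧' = q⟦(1:ℤ)⟧' := by rw [← Functor.map_comp, hq]
  have h12 : q ≫ a = 0 := comp_distTriang_mor_zero₁₂ _ hT
  have h23 : a ≫ δ = 0 := comp_distTriang_mor_zero₂₃ _ hT
  have h31 : δ ≫ q⟦(1:ℤ)⟧' = 0 := comp_distTriang_mor_zero₃₁ _ hT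
  -- construct t : K ⟶ W
  obtain ⟨t, hat, htq⟩ : ∃ t : K ⟶ W, a ≫ t = 𝟙 W - q ∧ t ≫ (𝟙 W - q) = t := by
    obtain ⟨t0, ht0⟩ : ∃ t0 : K ⟶ W, 𝟙 W - q = a ≫ t0 :=
      Triangle.yoneda_exact₂ _ hT (𝟙 W - q) (by
        have h : q ≫ (𝟙 W - q) = 0 := by simp [Preadditive.comp_sub, hq]
        exact h)
    have ht0' : 𝟙 W - q = a ≫ t0 := ht0
    refine ⟨t0 ≫ (𝟙 W - q), ?_, ?_⟩
    · rw [← Category.assoc, ← ht0']; simp [hq]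
    · rw [Category.assoc]; congr 1; simp [hq]
  -- construct m : W⟦1⟧ ⟶ K
  obtain ⟨m1, hm1δ, hqm1⟩ :
      ∃ m1 : (W⟦(1:ℤ)⟧) ⟶ K, m1 ≫ δ = 𝟙 (W⟦(1:ℤ)⟧) - q⟦(1:ℤ)⟧' ∧
        (𝟙 (W⟦(1:ℤ)⟧) - q⟦(1:ℤ)⟧') ≫ m1 = m1 := by
    obtain ⟨m0, hm0⟩ := Triangle.coyoneda_exact₁ _ hT (𝟙 (W⟦(1:ℤ)⟧) - q⟦(1:ℤ)⟧')
      (by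
        have h : (𝟙 (W⟦(1:ℤ)⟧) - q⟦(1:ℤ)⟧') ≫ q⟦(1:ℤ)⟧' = 0 := by
          simp [Preadditive.sub_comp, hq1]
        exact h)
    have hm0' : 𝟙 (W⟦(1:ℤ)⟧) - q⟦(1:ℤ)⟧' = (show (W⟦(1:ℤ)⟧) ⟶ K from m0) ≫ δ := hm0
    refine ⟨(𝟙 (W⟦(1:ℤ)⟧) - q⟦(1:ℤ)⟧') ≫ (show (W⟦(1:ℤ)⟧) ⟶ K from m0), ?_, ?_⟩
    · rw [Category.assoc, ← hm0']; simp [hq1]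
    · rw [← Category.assoc]; congr 1; simp [hq1]
  obtain ⟨m, hmδ, hqm, hmt⟩ :
      ∃ m : (W⟦(1:ℤ)⟧) ⟶ K, m ≫ δ = 𝟙 (W⟦(1:ℤ)⟧) - q⟦(1:ℤ)⟧' ∧
        (𝟙 (W⟦(1:ℤ)⟧) - q⟦(1:ℤ)⟧') ≫ m = m ∧ m ≫ t = 0 := by
    refine ⟨m1 - m1 ≫ t ≫ a, ?_, ?_, ?_⟩
    · rw [Preadditive.sub_comp, hm1δ]
      simp only [Category.assoc, h23, comp_zero, sub_zero]
    · rw [Preadditive.comp_sub, hqm1, reassoc_of% hqm1]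
    · rw [Preadditive.sub_comp]
      simp only [Category.assoc]
      rw [hat, htq]
      simp
  -- the sum identity
  have hsum : t ≫ a + δ ≫ m = 𝟙 K := by
    have hθδ : (𝟙 K - t ≫ a - δ ≫ m) ≫ δ = 0 := by
      simp only [Preadditive.sub_comp, Category.assoc, h23, comp_zero, hmδ, Category.id_comp,
        Preadditive.comp_sub, Category.comp_id, h31, sub_zero, sub_self]
    obtain ⟨ψ, hψ⟩ : ∃ ψ : K ⟶ W, 𝟙 K - t ≫ a - δ ≫ m = ψ ≫ a :=
        Triangle.coyoneda_exact₃ _ hT (𝟙 K - t ≫ a - δ ≫ m) hθδ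
    have hψ' : 𝟙 K - t ≫ a - δ ≫ m = ψ ≫ a := hψ
    have hθt : (𝟙 K - t ≫ a - δ ≫ m) ≫ t = 0 := by
      rw [Preadditive.sub_comp, Preadditive.sub_comp, Category.assoc, hat, Category.assoc, hmt,
        htq]
      simp
    have hθ : 𝟙 K - t ≫ a - δ ≫ m = 0 := by
      have h2 : ((𝟙 K - t ≫ a - δ ≫ m) ≫ t) ≫ a = 𝟙 K - t ≫ a - δ ≫ m := by
        rw [hψ', Category.assoc, Category.assoc, reassoc_of% hat]
        simp [Preadditive.sub_comp, h12]
      rw [← h2, hθt, zero_comp]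
    rw [sub_sub, sub_eq_zero] at hθ
    exact hθ.symm
  exact ⟨{
    hom := biprod.lift ⟨t, by simp [htq]⟩ ⟨δ, by simp [Preadditive.comp_sub, h31]⟩
    inv := biprod.desc ⟨a, by simp [Preadditive.sub_comp, h12]⟩ ⟨m, by simp [hqm]⟩
    hom_inv_id := by
      rw [biprod.lift_desc]
      exact Karoubi.hom_ext _ _ (by simpa using hsum)
    inv_hom_id := by
      apply biprod.hom_ext' <;> apply biprod.hom_ext <;>
        simp only [Category.assoc, Category.comp_id, Category.id_comp,
          biprod.inl_desc_assoc, biprod.inr_desc_assoc, biprod.lift_fst, biprod.lift_snd,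
          biprod.inl_fst, biprod.inl_snd, biprod.inr_fst, biprod.inr_snd,
          Karoubi.hom_eq_zero_iff, Karoubi.hom_ext_iff, Karoubi.comp_f, Karoubi.id_f] <;>
        simp [hat, h23, hmt, hmδ] }⟩

/-- Main auxiliary statement: splitting of an idempotent. -/
theorem split_of_idem (F : C ⥤ C) [F.Additive]
    (e : ∀ X : C, F.obj X ≅ F.obj (X⟦(2 : ℤ)⟧) ⊞ X)
    (hnat : ∀ {X Y : C} (f : X ⟶ Y),
      F.map f ≫ (e Y).hom = (e X).hom ≫ biprod.map (F.map (f⟦(2 : ℤ)⟧')) f)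
    (X : C) (p : X ⟶ X) (hp : p ≫ p = p) :
    ∃ (Y : C) (i : Y ⟶ X) (r : X ⟶ Y), i ≫ r = 𝟙 Y ∧ r ≫ i = p := by
  have hp1 : p⟦(1:ℤ)⟧' ≫ p⟦(1:ℤ)⟧' = p⟦(1:ℤ)⟧' := by rw [← Functor.map_comp, hp]
  have hp2 : p⟦(2:ℤ)⟧' ≫ p⟦(2:ℤ)⟧' = p⟦(2:ℤ)⟧' := by rw [← Functor.map_comp, hp]
  have hp11 : p⟦(1:ℤ)⟧'⟦(1:ℤ)⟧' ≫ p⟦(1:ℤ)⟧'⟦(1:ℤ)⟧' = p⟦(1:ℤ)⟧'⟦(1:ℤ)⟧' := by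
    rw [← Functor.map_comp, hp1]
  have hFp : F.map p ≫ F.map p = F.map p := by rw [← F.map_comp, hp]
  have hFp1 : F.map (p⟦(1:ℤ)⟧') ≫ F.map (p⟦(1:ℤ)⟧') = F.map (p⟦(1:ℤ)⟧') := by
    rw [← F.map_comp, hp1]
  have hFp2 : F.map (p⟦(2:ℤ)⟧') ≫ F.map (p⟦(2:ℤ)⟧') = F.map (p⟦(2:ℤ)⟧') := by
    rw [← F.map_comp, hp2]
  have hFp11 : F.map (p⟦(1:ℤ)⟧'⟦(1:ℤ)⟧') ≫ F.map (p⟦(1:ℤ)⟧'⟦(1:ℤ)⟧')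
      = F.map (p⟦(1:ℤ)⟧'⟦(1:ℤ)⟧') := by rw [← F.map_comp, hp11]
  -- triangles over p and 𝟙 - p⟦1⟧
  obtain ⟨K, a, δ, hT1⟩ := Pretriangulated.distinguished_cocone_triangle p
  obtain ⟨K', a', δ', hT2⟩ :=
    Pretriangulated.distinguished_cocone_triangle (𝟙 (X⟦(1:ℤ)⟧) - p⟦(1:ℤ)⟧')
  obtain ⟨isoK⟩ := coneIso p hp a δ hT1
  obtain ⟨isoK'0⟩ := coneIso (𝟙 (X⟦(1:ℤ)⟧) - p⟦(1:ℤ)⟧') (by simp [hp1]) a' δ' hT2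
  -- bridges
  have brY1 : (⟨X⟦(1:ℤ)⟧, 𝟙 (X⟦(1:ℤ)⟧) - (𝟙 (X⟦(1:ℤ)⟧) - p⟦(1:ℤ)⟧'), by simp [hp1]⟩ : Karoubi C)
      ≅ ⟨X⟦(1:ℤ)⟧, p⟦(1:ℤ)⟧', hp1⟩ :=
    mkIso (Iso.refl _) (by simp [hp1]) hp1 (by simp)
  have brY2 : (⟨(X⟦(1:ℤ)⟧)⟦(1:ℤ)⟧,
        𝟙 ((X⟦(1:ℤ)⟧)⟦(1:ℤ)⟧) - (𝟙 (X⟦(1:ℤ)⟧) - p⟦(1:ℤ)⟧')⟦(1:ℤ)⟧', by simp [hp11]⟩ : Karoubi C)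
      ≅ ⟨(X⟦(1:ℤ)⟧)⟦(1:ℤ)⟧, p⟦(1:ℤ)⟧'⟦(1:ℤ)⟧', hp11⟩ :=
    mkIso (Iso.refl _) (by simp [hp11]) hp11 (by simp)
  have isoK' : (toKaroubi C).obj K' ≅
      (⟨X⟦(1:ℤ)⟧, p⟦(1:ℤ)⟧', hp1⟩ : Karoubi C) ⊞
        ⟨(X⟦(1:ℤ)⟧)⟦(1:ℤ)⟧, p⟦(1:ℤ)⟧'⟦(1:ℤ)⟧', hp11⟩ :=
    isoK'0 ≪≫ biprod.mapIso brY1 brY2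
  -- Karoubi extension of F
  have bb : ∀ W : C, (gfun F).obj ((toKaroubi C).obj W) ≅ (toKaroubi C).obj (F.obj W) :=
    fun W => mkIso (Iso.refl _) (by simp) (by simp) (by simp)
  -- image of the cone of p
  have brQ0 : ((gfun F).obj ⟨X, 𝟙 X - p, by simp [hp]⟩ : Karoubi C)
      ≅ ⟨F.obj X, 𝟙 (F.obj X) - F.map p, by simp [hFp]⟩ :=
    mkIso (Iso.refl _) (by rw [← F.map_comp]; congr 1; simp [hp]) (by simp [hFp])
      (by simp [Functor.map_sub, Functor.map_id])
  have brQ1 : ((gfun F).obj ⟨X⟦(1:ℤ)⟧, 𝟙 (X⟦(1:ℤ)⟧) - p⟦(1:ℤ)⟧', by simp [hp1]⟩ : Karoubi C)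
      ≅ ⟨F.obj (X⟦(1:ℤ)⟧), 𝟙 (F.obj (X⟦(1:ℤ)⟧)) - F.map (p⟦(1:ℤ)⟧'), by simp [hFp1]⟩ :=
    mkIso (Iso.refl _) (by rw [← F.map_comp]; congr 1; simp [hp1]) (by simp [hFp1])
      (by simp [Functor.map_sub, Functor.map_id])
  have gKQ : (toKaroubi C).obj (F.obj K) ≅
      (⟨F.obj X, 𝟙 (F.obj X) - F.map p, by simp [hFp]⟩ : Karoubi C) ⊞
        ⟨F.obj (X⟦(1:ℤ)⟧), 𝟙 (F.obj (X⟦(1:ℤ)⟧)) - F.map (p⟦(1:ℤ)⟧'), by simp [hFp1]⟩ :=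
    (bb K).symm ≪≫ (gfun F).mapIso isoK ≪≫ addMapBiprod (gfun F) _ _ ≪≫
      biprod.mapIso brQ0 brQ1
  -- image of the cone of 𝟙 - p⟦1⟧
  have brP2 : ((gfun F).obj ⟨(X⟦(1:ℤ)⟧)⟦(1:ℤ)⟧, p⟦(1:ℤ)⟧'⟦(1:ℤ)⟧', hp11⟩ : Karoubi C)
      ≅ ⟨F.obj (X⟦(2:ℤ)⟧), F.map (p⟦(2:ℤ)⟧'), hFp2⟩ :=
    (mkIso (F.mapIso ((shiftFunctorAdd' C 1 1 2 (by norm_num)).app X)) hFp2 hFp11 (by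
      simp only [Functor.mapIso_hom, Iso.app_hom]
      rw [← F.map_comp, ← F.map_comp]
      congr 1
      exact (shiftFunctorAdd' C 1 1 2 (by norm_num)).hom.naturality p)).symm
  have gK'P : (toKaroubi C).obj (F.obj K') ≅
      (⟨F.obj (X⟦(1:ℤ)⟧), F.map (p⟦(1:ℤ)⟧'), hFp1⟩ : Karoubi C) ⊞
        ⟨F.obj (X⟦(2:ℤ)⟧), F.map (p⟦(2:ℤ)⟧'), hFp2⟩ :=
    (bb K').symm ≪≫ (gfun F).mapIso isoK' ≪≫ addMapBiprod (gfun F) _ _ ≪≫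
      biprod.mapIso (Iso.refl _) brP2
  -- the periodicity isomorphism
  have esplit : (⟨F.obj X, F.map p, hFp⟩ : Karoubi C) ≅
      (⟨F.obj (X⟦(2:ℤ)⟧), F.map (p⟦(2:ℤ)⟧'), hFp2⟩ : Karoubi C) ⊞ ⟨X, p, hp⟩ :=
    mkIso (e X) hFp (by ext <;> simp [hFp2, hp]) (hnat p) ≪≫
      biprodMkIso (F.map (p⟦(2:ℤ)⟧')) p hFp2 hp
  -- splittings of the objects F(X⟦j⟧)
  have s2 := splitIso (F.map (p⟦(2:ℤ)⟧')) hFp2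
  have s1 := splitIso (F.map (p⟦(1:ℤ)⟧')) hFp1
  have s0 := splitIso (F.map p) hFp
  -- assemble
  have ΨB : (toKaroubi C).obj (F.obj (X⟦(2:ℤ)⟧) ⊞ (F.obj (X⟦(1:ℤ)⟧) ⊞ F.obj X)) ≅ _ :=
    addMapBiprod (toKaroubi C) _ _ ≪≫ biprod.mapIso s2
      (addMapBiprod (toKaroubi C) _ _ ≪≫ biprod.mapIso s1
        (s0 ≪≫ biprod.mapIso esplit (Iso.refl _)))
  have ΨN : (toKaroubi C).obj (F.obj K ⊞ (F.obj K' ⊞ F.obj (X⟦(2:ℤ)⟧))) ≅ _ :=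
    addMapBiprod (toKaroubi C) _ _ ≪≫ biprod.mapIso gKQ
      (addMapBiprod (toKaroubi C) _ _ ≪≫ biprod.mapIso gK'P s2)
  have Ψ : (toKaroubi C).obj (F.obj (X⟦(2:ℤ)⟧) ⊞ (F.obj (X⟦(1:ℤ)⟧) ⊞ F.obj X)) ≅
      (⟨X, p, hp⟩ : Karoubi C) ⊞
        (toKaroubi C).obj (F.obj K ⊞ (F.obj K' ⊞ F.obj (X⟦(2:ℤ)⟧))) :=
    ΨB ≪≫ shuffle7 _ _ _ _ _ _ _ ≪≫ (biprod.mapIso (Iso.refl _) ΨN).symm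
  -- extract components
  obtain ⟨ι, ρ, u, v, hιρ, hvu, hιu, h4⟩ :
      ∃ (ι : (F.obj K ⊞ (F.obj K' ⊞ F.obj (X⟦(2:ℤ)⟧))) ⟶
          (F.obj (X⟦(2:ℤ)⟧) ⊞ (F.obj (X⟦(1:ℤ)⟧) ⊞ F.obj X)))
        (ρ : (F.obj (X⟦(2:ℤ)⟧) ⊞ (F.obj (X⟦(1:ℤ)⟧) ⊞ F.obj X)) ⟶
          (F.obj K ⊞ (F.obj K' ⊞ F.obj (X⟦(2:ℤ)⟧))))
        (u : (F.obj (X⟦(2:ℤ)⟧) ⊞ (F.obj (X⟦(1:ℤ)⟧) ⊞ F.obj X)) ⟶ X)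
        (v : X ⟶ (F.obj (X⟦(2:ℤ)⟧) ⊞ (F.obj (X⟦(1:ℤ)⟧) ⊞ F.obj X))),
        ι ≫ ρ = 𝟙 _ ∧ v ≫ u = p ∧ ι ≫ u = 0 ∧ u ≫ v + ρ ≫ ι = 𝟙 _ := by
    refine ⟨(biprod.inr ≫ Ψ.inv).f, (Ψ.hom ≫ biprod.snd).f, (Ψ.hom ≫ biprod.fst).f,
      (biprod.inl ≫ Ψ.inv).f, ?_, ?_, ?_, ?_⟩
    · have h : (biprod.inr ≫ Ψ.inv) ≫ (Ψ.hom ≫ biprod.snd) = 𝟙 _ := by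
        rw [Category.assoc, Iso.inv_hom_id_assoc, biprod.inr_snd]
      exact congrArg Karoubi.Hom.f h
    · have h : (biprod.inl ≫ Ψ.inv) ≫ (Ψ.hom ≫ biprod.fst) = 𝟙 (⟨X, p, hp⟩ : Karoubi C) := by
        rw [Category.assoc, Iso.inv_hom_id_assoc, biprod.inl_fst]
      exact congrArg Karoubi.Hom.f h
    · have h : (biprod.inr ≫ Ψ.inv) ≫ (Ψ.hom ≫ biprod.fst) = 0 := by
        rw [Category.assoc, Iso.inv_hom_id_assoc, biprod.inr_fst]
      exact congrArg Karoubi.Hom.f h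
    · have h : (Ψ.hom ≫ biprod.fst) ≫ (biprod.inl ≫ Ψ.inv) +
          (Ψ.hom ≫ biprod.snd) ≫ (biprod.inr ≫ Ψ.inv) = 𝟙 _ := by
        simp only [Category.assoc]
        rw [← Preadditive.comp_add, ← Category.assoc biprod.fst biprod.inl Ψ.inv,
          ← Category.assoc biprod.snd biprod.inr Ψ.inv, ← Preadditive.add_comp, biprod.total,
          Category.id_comp, Iso.hom_inv_id]
      rw [← Karoubi.comp_f, ← Karoubi.comp_f, ← add_f, h]
      rfl
  -- cone of ι
  obtain ⟨Y, π, δY, hTY⟩ := Pretriangulated.distinguished_cocone_triangle ι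
  have hιπ : ι ≫ π = 0 := comp_distTriang_mor_zero₁₂ _ hTY
  have hδY : δY = 0 := by
    have h1 : δY ≫ ι⟦(1:ℤ)⟧' = 0 := comp_distTriang_mor_zero₃₁ _ hTY
    have h2 : ι⟦(1:ℤ)⟧' ≫ ρ⟦(1:ℤ)⟧' = 𝟙 _ := by
      rw [← Functor.map_comp, hιρ]; simp
    calc δY = δY ≫ ι⟦(1:ℤ)⟧' ≫ ρ⟦(1:ℤ)⟧' := by rw [h2, Category.comp_id]
      _ = 0 := by rw [← Category.assoc, h1, zero_comp]
  obtain ⟨σ, hσπ, hσρ⟩ : ∃ σ, σ ≫ π = 𝟙 Y ∧ σ ≫ ρ = 0 := by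
    obtain ⟨σ0, hσ0⟩ := Triangle.coyoneda_exact₃ _ hTY (𝟙 Y) (by exact (Category.id_comp _).trans hδY)
    have hσ0' : 𝟙 Y = (show Y ⟶ (F.obj (X⟦(2:ℤ)⟧) ⊞ (F.obj (X⟦(1:ℤ)⟧) ⊞ F.obj X)) from σ0)
        ≫ π := hσ0
    refine ⟨(show Y ⟶ (F.obj (X⟦(2:ℤ)⟧) ⊞ (F.obj (X⟦(1:ℤ)⟧) ⊞ F.obj X)) from σ0) -
      ((show Y ⟶ (F.obj (X⟦(2:ℤ)⟧) ⊞ (F.obj (X⟦(1:ℤ)⟧) ⊞ F.obj X)) from σ0) ≫ ρ) ≫ ι, ?_, ?_⟩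
    · rw [Preadditive.sub_comp, ← hσ0', Category.assoc, hιπ, comp_zero, sub_zero]
    · rw [Preadditive.sub_comp, Category.assoc, hιρ, Category.comp_id, sub_self]
  have hθ : ρ ≫ ι + π ≫ σ = 𝟙 _ := by
    have hθπ : (𝟙 _ - ρ ≫ ι - π ≫ σ) ≫ π = 0 := by
      rw [Preadditive.sub_comp, Preadditive.sub_comp, Category.assoc, hιπ, comp_zero,
        Category.assoc, hσπ, Category.comp_id, Category.id_comp]
      simp
    obtain ⟨ψ, hψ⟩ : ∃ ψ : (F.obj (X⟦(2:ℤ)⟧) ⊞ (F.obj (X⟦(1:ℤ)⟧) ⊞ F.obj X)) ⟶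
          (F.obj K ⊞ (F.obj K' ⊞ F.obj (X⟦(2:ℤ)⟧))), 𝟙 _ - ρ ≫ ι - π ≫ σ = ψ ≫ ι :=
        Triangle.coyoneda_exact₂ _ hTY (𝟙 _ - ρ ≫ ι - π ≫ σ) hθπ
    have hψ' : 𝟙 _ - ρ ≫ ι - π ≫ σ = ψ ≫ ι := hψ
    have hθρ : (𝟙 _ - ρ ≫ ι - π ≫ σ) ≫ ρ = 0 := by
      rw [Preadditive.sub_comp, Preadditive.sub_comp, Category.assoc, hιρ, Category.comp_id,
        Category.assoc, hσρ, comp_zero, Category.id_comp]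
      simp
    have hz : 𝟙 _ - ρ ≫ ι - π ≫ σ = 0 := by
      calc 𝟙 _ - ρ ≫ ι - π ≫ σ = ((𝟙 _ - ρ ≫ ι - π ≫ σ) ≫ ρ) ≫ ι := by
            rw [hψ']
            simp only [Category.assoc, reassoc_of% hιρ]
        _ = 0 := by rw [hθρ, zero_comp]
    rw [sub_sub, sub_eq_zero] at hz
    exact hz.symm
  have huv : u ≫ v = 𝟙 _ - ρ ≫ ι := by rw [← h4]; abel
  have hπσ : π ≫ σ = 𝟙 _ - ρ ≫ ι := by rw [← hθ]; abel
  refine ⟨Y, σ ≫ u, v ≫ π, ?_, ?_⟩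
  · calc (σ ≫ u) ≫ v ≫ π = σ ≫ (u ≫ v) ≫ π := by simp only [Category.assoc]
      _ = σ ≫ (𝟙 _ - ρ ≫ ι) ≫ π := by rw [huv]
      _ = 𝟙 Y := by
        simp only [Preadditive.sub_comp, Preadditive.comp_sub, Category.assoc,
          Category.id_comp, hιπ, comp_zero, sub_zero, hσπ]
  · calc (v ≫ π) ≫ σ ≫ u = v ≫ (π ≫ σ) ≫ u := by simp only [Category.assoc]
      _ = v ≫ (𝟙 _ - ρ ≫ ι) ≫ u := by rw [hπσ]
      _ = p := by
        simp only [Preadditive.sub_comp, Preadditive.comp_sub, Category.assoc,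
          Category.id_comp, hιu, comp_zero, sub_zero, hvu]

end

end PeriodicFunctorAux

open CategoryTheory.Idempotents PeriodicFunctorAux

variable (C : Type u) [Category.{v} C] [HasZeroObject C] [Preadditive C] [HasShift C ℤ]
  [∀ n : ℤ, (shiftFunctor C n).Additive] [Pretriangulated C]

variable {C}

/-- if an exact endofunctor `F` of a triangulated category satisfies
`F ≅ F ∘ [2] ⊕ id` (naturally), then `C` is Karoubian (idempotent complete). -/
theorem idempotentComplete_of_periodic_functor [HasBinaryBiproducts C]
    (F : C ⥤ C) [F.CommShift ℤ] [F.IsTriangulated]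
    (e : ∀ X : C, F.obj X ≅ F.obj (X⟦(2 : ℤ)⟧) ⊞ X)
    (hnat : ∀ {X Y : C} (f : X ⟶ Y),
      F.map f ≫ (e Y).hom = (e X).hom ≫ biprod.map (F.map (f⟦(2 : ℤ)⟧')) f) :
    IsIdempotentComplete C := by
  constructor
  intro X p hp
  exact PeriodicFunctorAux.split_of_idem F e (fun {X Y} f => hnat f) X p hp
end
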